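/- arXiv:2503.07273 — 3 statements merged into one kernel-verified Lean document; each statement's English description precedes it below -/
import Mathlib

section
/- Let R be a binary relation ("reduces to") on a type of states. Then a state P is fairly terminating if and only if every state Q reachable from P (i.e., P R* Q, where R* is the reflexive-transitive closure of R) is weakly terminating. -/
/-- A state is terminal if it has no `R`-successor. -/
def Terminal {α : Type*} (R : α → α → Prop) (P : α) : Prop :=
  ∀ Q, ¬ R P Q

/-- A state `P` is weakly terminating if it can reach (via `R*`) a terminal state,
i.e. `P` has at least one finite run. -/
def WeaklyTerminating {α : Type*} (R : α → α → Prop) (P : α) : Prop :=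
  ∃ Q, Relation.ReflTransGen R P Q ∧ Terminal R Q

/-- An infinite run of `P`: an infinite reduction sequence starting at `P`.
(Such a sequence is automatically a maximal reduction sequence, i.e. a run.) -/
def InfRun {α : Type*} (R : α → α → Prop) (P : α) (σ : ℕ → α) : Prop :=
  σ 0 = P ∧ ∀ i, R (σ i) (σ (i + 1))

/-- An infinite run is fair if it contains only finitely many weakly
terminating states (i.e. finitely many positions holding a weakly
terminating state). -/
def FairInfRun {α : Type*} (R : α → α → Prop) (σ : ℕ → α) : Prop :=
  {i | WeaklyTerminating R (σ i)}.Finite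

/-- `P` is fairly terminating if every fair run of `P` is finite.  Since every
finite run is trivially fair and finite, this amounts to: `P` has no infinite
fair run. -/
def FairlyTerminating {α : Type*} (R : α → α → Prop) (P : α) : Prop :=
  ∀ σ : ℕ → α, InfRun R P σ → ¬ FairInfRun R σ

private lemma nonWT_succ {α : Type*} {R : α → α → Prop} {x : α}
    (h : ¬ WeaklyTerminating R x) : ∃ y, R x y ∧ ¬ WeaklyTerminating R y := by
  by_cases ht : Terminal R x
  · exact absurd ⟨x, Relation.ReflTransGen.refl, ht⟩ h
  · simp only [Terminal, not_forall, not_not] at ht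
    obtain ⟨y, hy⟩ := ht
    refine ⟨y, hy, fun ⟨z, hz, hzt⟩ => h ⟨z, Relation.ReflTransGen.head hy hz, hzt⟩⟩

private lemma nonWT_infrun {α : Type*} {R : α → α → Prop} {Q : α}
    (h : ¬ WeaklyTerminating R Q) :
    ∃ σ, InfRun R Q σ ∧ ∀ i, ¬ WeaklyTerminating R (σ i) := by
  classical
  let f : {x // ¬ WeaklyTerminating R x} → {x // ¬ WeaklyTerminating R x} :=
    fun x => ⟨(nonWT_succ x.2).choose, (nonWT_succ x.2).choose_spec.2⟩
  refine ⟨fun n => (f^[n] ⟨Q, h⟩).1, ⟨rfl, fun i => ?_⟩, fun i => (f^[i] ⟨Q, h⟩).2⟩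
  show R (f^[i] ⟨Q, h⟩).1 (f^[i+1] ⟨Q, h⟩).1
  rw [Function.iterate_succ_apply']
  exact (nonWT_succ (f^[i] ⟨Q, h⟩).2).choose_spec.1

private lemma fair_run_of_reach {α : Type*} {R : α → α → Prop} {P Q : α}
    (hr : Relation.ReflTransGen R P Q) (h : ¬ WeaklyTerminating R Q) :
    ∃ σ, InfRun R P σ ∧ FairInfRun R σ := by
  induction hr using Relation.ReflTransGen.head_induction_on with
  | refl =>
    obtain ⟨σ, hσ, hw⟩ := nonWT_infrun h
    exact ⟨σ, hσ, Set.Finite.subset Set.finite_empty (fun i hi => (hw i hi).elim)⟩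
  | @head a b hab _ ih =>
    obtain ⟨σ, hσ, hf⟩ := ih
    refine ⟨fun n => Nat.rec a (fun i _ => σ i) n, ⟨rfl, fun i => ?_⟩, ?_⟩
    · cases i with
      | zero => simpa [hσ.1] using hab
      | succ i => exact hσ.2 i
    · have : {i | WeaklyTerminating R ((fun n => Nat.rec a (fun i _ => σ i) n : ℕ → α) i)}
          ⊆ insert 0 ((· + 1) '' {i | WeaklyTerminating R (σ i)}) := by
        intro i hi
        cases i with
        | zero => exact Set.mem_insert _ _
        | succ i => exact Set.mem_insert_of_mem _ ⟨i, hi, rfl⟩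
      exact Set.Finite.subset ((hf.image _).insert 0) this

/-- `P` is fairly terminating iff every state `Q` reachable from
`P` is weakly terminating. -/
theorem fairlyTerminating_iff_forall_reachable_weaklyTerminating
    {α : Type*} (R : α → α → Prop) (P : α) :
    FairlyTerminating R P ↔
      ∀ Q, Relation.ReflTransGen R P Q → WeaklyTerminating R Q := by
  constructor
  · intro hft Q hr
    by_contra hw
    obtain ⟨σ, hσ, hf⟩ := fair_run_of_reach hr hw
    exact hft σ hσ hf
  · intro h σ hσ hf
    have hreach : ∀ i, Relation.ReflTransGen R P (σ i) := by
      intro i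
      induction i with
      | zero => rw [hσ.1]
      | succ i ih => exact ih.tail (hσ.2 i)
    have : {i | WeaklyTerminating R (σ i)} = Set.univ :=
      Set.eq_univ_of_forall fun i => h _ (hreach i)
    unfold FairInfRun at hf
    rw [this] at hf
    exact Set.infinite_univ hf
end

section
/- Let R be a binary relation ("reduces to") on a type of states. Then every finite reduction sequence from a state P can be extended to a fair run of P; that is, if (P = P₀, P₁, …, Pₙ) is a finite sequence with Pᵢ R Pᵢ₊₁ for all i < n, then there exists a fair run of P whose initial segment is (P₀, P₁, …, Pₙ). -/
lemma reflTransGen_exists_seq {α : Type*} {R : α → α → Prop} {a b : α}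
    (h : Relation.ReflTransGen R a b) :
    ∃ k, ∃ g : ℕ → α, g 0 = a ∧ g k = b ∧ ∀ i, i < k → R (g i) (g (i + 1)) := by
  induction h with
  | refl => exact ⟨0, fun _ => a, rfl, rfl, fun i hi => absurd hi (Nat.not_lt_zero i)⟩
  | @tail b c hab hbc ih =>
    obtain ⟨k, g, hg0, hgk, hgs⟩ := ih
    refine ⟨k + 1, fun i => if i ≤ k then g i else c, by simp [hg0], by simp, ?_⟩
    intro i hi
    rcases lt_or_eq_of_le (Nat.lt_succ_iff.mp hi) with h' | h'
    · simp only [h'.le, le_of_lt, if_pos, Nat.succ_le_of_lt h', if_pos h']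
      exact hgs i h'
    · subst h'; simp [hgk, hbc]

/-- every finite reduction sequence `(P = f 0, f 1, …, f n)` can
be extended to a fair run of `P`: either to a finite run (a reduction sequence
ending in a terminal state, which is trivially fair since it contains finitely
many states), or to an infinite run containing only finitely many weakly
terminating states. -/
theorem finite_reduction_sequence_extends_to_fair_run
    {α : Type*} (R : α → α → Prop) (P : α) (n : ℕ) (f : ℕ → α)
    (h0 : f 0 = P) (hstep : ∀ i, i < n → R (f i) (f (i + 1))) :
    (∃ m, n ≤ m ∧ ∃ g : ℕ → α, (∀ i, i ≤ n → g i = f i) ∧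
        (∀ i, i < m → R (g i) (g (i + 1))) ∧ Terminal R (g m)) ∨
    (∃ g : ℕ → α, (∀ i, i ≤ n → g i = f i) ∧
        (∀ i, R (g i) (g (i + 1))) ∧
        {i | WeaklyTerminating R (g i)}.Finite) := by
  classical
  by_cases hWT : WeaklyTerminating R (f n)
  · -- extend to a terminal state
    obtain ⟨T, hpath, hT⟩ := hWT
    obtain ⟨k, h, hh0, hhk, hhs⟩ := reflTransGen_exists_seq hpath
    left
    refine ⟨n + k, Nat.le_add_right n k, fun i => if i ≤ n then f i else h (i - n),
      fun i hi => if_pos hi, ?_, ?_⟩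
    · intro i hi
      rcases lt_or_ge i n with h' | h'
      · simp only [h'.le, if_pos, Nat.succ_le_of_lt h']
        exact hstep i h'
      · have hi1 : ¬ i + 1 ≤ n := by omega
        have hstepk : i - n < k := by omega
        have e1 : (if i ≤ n then f i else h (i - n)) = h (i - n) := by
          rcases eq_or_lt_of_le h' with h'' | h''
          · simp [← h'', hh0]
          · rw [if_neg (by omega)]
        have e2 : i + 1 - n = (i - n) + 1 := by omega
        beta_reduce
        rw [e1, if_neg hi1, e2]
        exact hhs _ hstepk
    · beta_reduce
      rcases Nat.eq_zero_or_pos k with hk | hk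
      · subst hk
        simp only [Nat.add_zero, if_pos le_rfl]
        rw [← hh0, hhk]; exact hT
      · rw [if_neg (by omega)]
        have : n + k - n = k := by omega
        rw [this, hhk]; exact hT
  · -- build an infinite run through non-weakly-terminating states
    right
    have key : ∀ a, ¬ WeaklyTerminating R a → ∃ b, R a b ∧ ¬ WeaklyTerminating R b := by
      intro a ha
      have hnt : ¬ Terminal R a := fun ht => ha ⟨a, Relation.ReflTransGen.refl, ht⟩
      simp only [Terminal, not_forall, not_not] at hnt
      obtain ⟨b, hb⟩ := hnt
      refine ⟨b, hb, fun hbWT => ha ?_⟩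
      obtain ⟨T, hpath, hT⟩ := hbWT
      exact ⟨T, Relation.ReflTransGen.head hb hpath, hT⟩
    let step : α → α := fun a =>
      if h : ∃ b, R a b ∧ ¬ WeaklyTerminating R b then h.choose else a
    have hstep' : ∀ a, ¬ WeaklyTerminating R a →
        R a (step a) ∧ ¬ WeaklyTerminating R (step a) := by
      intro a ha
      have h := key a ha
      simp only [step, dif_pos h]
      exact h.choose_spec
    have hiter : ∀ j, ¬ WeaklyTerminating R (step^[j] (f n)) := by
      intro j
      induction j with
      | zero => simpa using hWT
      | succ j ih =>
        rw [Function.iterate_succ_apply']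
        exact (hstep' _ ih).2
    refine ⟨fun i => if i ≤ n then f i else step^[i - n] (f n), fun i hi => if_pos hi, ?_, ?_⟩
    · intro i
      rcases lt_or_ge i n with h' | h'
      · simp only [h'.le, if_pos, Nat.succ_le_of_lt h']
        exact hstep i h'
      · have e1 : (if i ≤ n then f i else step^[i - n] (f n)) = step^[i - n] (f n) := by
          rcases eq_or_lt_of_le h' with h'' | h''
          · simp [← h'']
          · rw [if_neg (by omega)]
        have e2 : i + 1 - n = (i - n) + 1 := by omega
        beta_reduce
        rw [e1, if_neg (by omega), e2, Function.iterate_succ_apply']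
        exact (hstep' _ (hiter (i - n))).1
    · apply Set.Finite.subset (Set.finite_Iio n)
      intro i hi
      simp only [Set.mem_setOf_eq] at hi
      by_contra hin
      simp only [Set.mem_Iio, not_lt] at hin
      rcases eq_or_lt_of_le hin with h'' | h''
      · rw [← h'', if_pos le_rfl] at hi
        exact hWT (h'' ▸ hi)
      · rw [if_neg (by omega)] at hi
        exact hiter (i - n) hi
end

section
/- Let R be a binary relation ("reduces to") on a type of states. If a state P is fairly terminating, then P is weakly terminating. -/
/-- fair termination implies weak termination. -/
theorem weaklyTerminating_of_fairlyTerminating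
    {α : Type*} (R : α → α → Prop) (P : α)
    (h : FairlyTerminating R P) : WeaklyTerminating R P := by
  by_contra hP
  -- every non-weakly-terminating state has a non-weakly-terminating successor
  have step : ∀ x : α, ¬ WeaklyTerminating R x →
      ∃ y, R x y ∧ ¬ WeaklyTerminating R y := by
    intro x hx
    have hnt : ¬ Terminal R x := fun ht => hx ⟨x, Relation.ReflTransGen.refl, ht⟩
    simp only [Terminal, not_forall, not_not] at hnt
    obtain ⟨y, hy⟩ := hnt
    refine ⟨y, hy, fun ⟨z, hz, hzt⟩ => hx ⟨z, Relation.ReflTransGen.head hy hz, hzt⟩⟩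
  classical
  let f : {x : α // ¬ WeaklyTerminating R x} → {x : α // ¬ WeaklyTerminating R x} :=
    fun x => ⟨(step x.1 x.2).choose, (step x.1 x.2).choose_spec.2⟩
  have hf : ∀ x : {x : α // ¬ WeaklyTerminating R x}, R x.1 (f x).1 :=
    fun x => (step x.1 x.2).choose_spec.1
  let g : ℕ → {x : α // ¬ WeaklyTerminating R x} := fun n => f^[n] ⟨P, hP⟩
  have hrun : InfRun R P (fun n => (g n).1) := by
    constructor
    · rfl
    · intro i
      show R (g i).1 (g (i+1)).1
      have : g (i + 1) = f (g i) := Function.iterate_succ_apply' f i _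
      rw [this]
      exact hf (g i)
  refine h _ hrun ?_
  show {i | WeaklyTerminating R ((g i).1)}.Finite
  have : {i | WeaklyTerminating R ((g i).1)} = ∅ := by
    ext i; simp [(g i).2]
  rw [this]; exact Set.finite_empty
end
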